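/- Let m, k ∈ ℕ and let N ≥ 3 be an integer with N − 2m − 2 > 0; set λ = (N − 2m − 2)/2. Fix y ∈ ℝ^N with ‖y‖ = 1. Then for all x ∈ ℝ^N∖{0}, Δ_x^m [ ‖x‖^{k+2m} · C^λ_{k+2m}(w) ] = (−1)^m · 4^m · (Γ(λ+m)/Γ(λ)) · Γ(m+1) · ‖x‖^k · C^{λ+m}_k(w), where Δ_x^m is the m-fold iterated Laplacian in x. -/

import Mathlib

open scoped RealInnerProductSpace

/-- The Gegenbauer polynomial `C_k^λ(z)` given by its explicit sum. -/
noncomputable def gegenbauer (k : ℕ) (l : ℝ) (z : ℝ) : ℝ :=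
  ∑ j ∈ Finset.range (k / 2 + 1),
    (-1 : ℝ) ^ j * (Real.Gamma ((k : ℝ) - j + l) /
      (Real.Gamma l * (Nat.factorial j) * (Nat.factorial (k - 2 * j)))) * (2 * z) ^ (k - 2 * j)

/-- The Euclidean Laplacian: the sum of the second partial derivatives. -/
noncomputable def lap {N : ℕ} (f : EuclideanSpace ℝ (Fin N) → ℝ)
    (x : EuclideanSpace ℝ (Fin N)) : ℝ :=
  ∑ i : Fin N, fderiv ℝ (fun z => fderiv ℝ f z (EuclideanSpace.single i 1)) x
    (EuclideanSpace.single i 1)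

/-- `Δ_x` acting on a function of two variables. -/
noncomputable def lapX {N : ℕ}
    (F : EuclideanSpace ℝ (Fin N) → EuclideanSpace ℝ (Fin N) → ℝ) :
    EuclideanSpace ℝ (Fin N) → EuclideanSpace ℝ (Fin N) → ℝ :=
  fun x y => lap (fun x' => F x' y) x

/-- `Δ_y` acting on a function of two variables. -/
noncomputable def lapY {N : ℕ}
    (F : EuclideanSpace ℝ (Fin N) → EuclideanSpace ℝ (Fin N) → ℝ) :
    EuclideanSpace ℝ (Fin N) → EuclideanSpace ℝ (Fin N) → ℝ :=
  fun x y => lap (F x) y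

/-!
For `‖y‖ = 1` the function `‖x‖ⁿ C_n^μ(⟪x, y⟫ / ‖x‖)` is the polynomial
`∑ⱼ cⱼ ⟪x, y⟫^(n-2j) ‖x‖^(2j)`, and
`Δ (⟪x, y⟫^p ‖x‖^(2q)) = p(p-1) ⟪x, y⟫^(p-2) ‖x‖^(2q) + 2q(2p+2q+N-2) ⟪x, y⟫^p ‖x‖^(2q-2)`.
Comparing coefficients, the Γ-function recurrence of the `cⱼ` gives
`Δ (‖x‖^(n+2) C_{n+2}^μ) = 2μ(2μ+2-N) ‖x‖ⁿ C_n^{μ+1}`. Iterating `m` times with `N = 2λ+2m+2`,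
the factors `2(λ+b)(2b-2m)`, `b < m`, multiply to `(-4)^m Γ(λ+m)/Γ(λ) · m!`.
-/

open Finset

section InnerMonomial

variable {F : Type*} [NormedAddCommGroup F] [InnerProductSpace ℝ F] (y : F)

lemma natCast_mul_pow_sub_one_mul (p : ℕ) (a : ℝ) : (p : ℝ) * a ^ (p - 1) * a = p * a ^ p := by
  cases p <;> simp [pow_succ, mul_assoc]

lemma natCast_mul_sub_one_mul_pow_sub_two_mul (q : ℕ) (a : ℝ) :
    (q : ℝ) * (q - 1) * a ^ (q - 2) * a = q * (q - 1) * a ^ (q - 1) := by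
  rcases q with _ | _ | q <;> simp [pow_succ, mul_assoc]

lemma hasFDerivAt_inner_left (v x : F) : HasFDerivAt (fun z : F => ⟪z, v⟫) (innerSL ℝ v) x := by
  convert (innerSL ℝ v).hasFDerivAt using 1
  funext z
  exact real_inner_comm v z

lemma contDiff_inner_pow_mul_norm_sq_pow (p q : ℕ) {r : WithTop ℕ∞} :
    ContDiff ℝ r (fun z : F => ⟪z, y⟫ ^ p * (‖z‖ ^ 2) ^ q) :=
  ((contDiff_id.inner ℝ contDiff_const).pow p).mul ((contDiff_norm_sq ℝ).pow q)

lemma hasFDerivAt_inner_pow_mul_norm_sq_pow (p q : ℕ) (x : F) :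
    HasFDerivAt (fun z => ⟪z, y⟫ ^ p * (‖z‖ ^ 2) ^ q)
      ((p * ⟪x, y⟫ ^ (p - 1) * (‖x‖ ^ 2) ^ q) • innerSL ℝ y
        + (2 * q * ⟪x, y⟫ ^ p * (‖x‖ ^ 2) ^ (q - 1)) • innerSL ℝ x) x := by
  refine (((hasFDerivAt_inner_left y x).pow p).fun_mul
    ((hasStrictFDerivAt_norm_sq x).hasFDerivAt.pow q)).congr_fderiv ?_
  ext v
  simp only [add_apply, smul_apply, innerSL_apply_apply, smul_eq_mul, nsmul_eq_mul]
  ring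

lemma fderiv_fderiv_inner_pow_mul_norm_sq_pow_apply (p q : ℕ) (v x : F) :
    fderiv ℝ (fun z => fderiv ℝ (fun z => ⟪z, y⟫ ^ p * (‖z‖ ^ 2) ^ q) z v) x v =
      p * (p - 1) * ⟪x, y⟫ ^ (p - 2) * (‖x‖ ^ 2) ^ q * ⟪y, v⟫ ^ 2
      + 4 * p * q * ⟪x, y⟫ ^ (p - 1) * (‖x‖ ^ 2) ^ (q - 1) * ⟪y, v⟫ * ⟪x, v⟫
      + 2 * q * ⟪x, y⟫ ^ p * (‖x‖ ^ 2) ^ (q - 1) * ‖v‖ ^ 2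
      + 4 * q * (q - 1) * ⟪x, y⟫ ^ p * (‖x‖ ^ 2) ^ (q - 2) * ⟪x, v⟫ ^ 2 := by
  have hD : (fun z => fderiv ℝ (fun z => ⟪z, y⟫ ^ p * (‖z‖ ^ 2) ^ q) z v) = fun z =>
      p * ⟪y, v⟫ * (⟪z, y⟫ ^ (p - 1) * (‖z‖ ^ 2) ^ q)
        + 2 * q * (⟪z, y⟫ ^ p * (‖z‖ ^ 2) ^ (q - 1) * ⟪z, v⟫) := by
    funext z
    rw [(hasFDerivAt_inner_pow_mul_norm_sq_pow y p q z).fderiv]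
    simp only [add_apply, smul_apply, innerSL_apply_apply, smul_eq_mul, real_inner_comm v z]
    ring
  rw [hD, ((((hasFDerivAt_inner_pow_mul_norm_sq_pow y (p - 1) q x).const_mul _).fun_add
    (((hasFDerivAt_inner_pow_mul_norm_sq_pow y p (q - 1) x).fun_mul
      (hasFDerivAt_inner_left v x)).const_mul _))).fderiv]
  simp only [add_apply, smul_apply, innerSL_apply_apply, smul_eq_mul, real_inner_comm v x,
    real_inner_self_eq_norm_sq, Nat.sub_sub, one_add_one_eq_two]
  rcases p with _ | p <;> rcases q with _ | q <;> push_cast <;> ring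

end InnerMonomial

section Laplacian

variable {N : ℕ}

local notation "E" => EuclideanSpace ℝ (Fin N)

lemma lap_finset_sum {ι : Type*} (u : Finset ι) {g : ι → E → ℝ}
    (hg : ∀ j ∈ u, ContDiff ℝ 2 (g j)) (x : E) :
    lap (fun z => ∑ j ∈ u, g j z) x = ∑ j ∈ u, lap (g j) x := by
  have hfd : ∀ j ∈ u, ∀ v : E, Differentiable ℝ (fun z => fderiv ℝ (g j) z v) := fun j hj v =>
    ((hg j hj).fderiv_right (m := 1) (by norm_num)).differentiable (by norm_num) |>.clm_apply
      (differentiable_const v)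
  have hD : ∀ v : E, (fun z => fderiv ℝ (fun z => ∑ j ∈ u, g j z) z v) =
      fun z => ∑ j ∈ u, fderiv ℝ (g j) z v := fun v => funext fun z => by
    rw [fderiv_fun_sum fun j hj => (hg j hj).differentiable (by norm_num) z, _root_.sum_apply]
  simp only [lap, hD, fderiv_fun_sum fun j hj => hfd j hj _ x, _root_.sum_apply]
  exact sum_comm

lemma lap_const_mul (c : ℝ) {g : E → ℝ} (hg : ContDiff ℝ 2 g) (x : E) :
    lap (fun z => c * g z) x = c * lap g x := by
  have hfd : ∀ v : E, Differentiable ℝ (fun z => fderiv ℝ g z v) := fun v =>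
    (hg.fderiv_right (m := 1) (by norm_num)).differentiable (by norm_num) |>.clm_apply
      (differentiable_const v)
  have hD : ∀ v : E, (fun z => fderiv ℝ (fun z => c * g z) z v) =
      fun z => c * fderiv ℝ g z v := fun v => funext fun z => by
    rw [fderiv_const_mul (hg.differentiable (by norm_num) z)]
    rfl
  simp only [lap, hD, fderiv_const_mul (hfd _ x), mul_sum]
  rfl

lemma sum_inner_single_mul_inner_single (u v : E) :
    ∑ i, ⟪u, EuclideanSpace.single i 1⟫ * ⟪v, EuclideanSpace.single i 1⟫ = ⟪u, v⟫ := by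
  simpa [real_inner_comm] using (EuclideanSpace.basisFun (Fin N) ℝ).sum_inner_mul_inner u v

lemma lap_inner_pow_mul_norm_sq_pow (y : E) (p q : ℕ) (x : E) :
    lap (fun z => ⟪z, y⟫ ^ p * (‖z‖ ^ 2) ^ q) x =
      p * (p - 1) * ‖y‖ ^ 2 * ⟪x, y⟫ ^ (p - 2) * (‖x‖ ^ 2) ^ q
      + 2 * q * (2 * p + 2 * q + N - 2) * ⟪x, y⟫ ^ p * (‖x‖ ^ 2) ^ (q - 1) := by
  simp only [lap, fderiv_fderiv_inner_pow_mul_norm_sq_pow_apply, sum_add_distrib]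
  simp only [mul_assoc, ← mul_sum, sq, sum_inner_single_mul_inner_single, PiLp.norm_single,
    norm_one, mul_one, sum_const, card_univ, Fintype.card_fin, nsmul_eq_mul]
  rw [real_inner_self_eq_norm_mul_norm, real_inner_self_eq_norm_mul_norm, real_inner_comm x y]
  linear_combination (4 * q * (‖x‖ * ‖x‖) ^ (q - 1)) * natCast_mul_pow_sub_one_mul p ⟪x, y⟫
    + 4 * ⟪x, y⟫ ^ p * natCast_mul_sub_one_mul_pow_sub_two_mul q (‖x‖ * ‖x‖)

end Laplacian

noncomputable def gegenbauerCoeff (n : ℕ) (μ : ℝ) (j : ℕ) : ℝ :=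
  (-1 : ℝ) ^ j * (Real.Gamma ((n : ℝ) - j + μ) /
    (Real.Gamma μ * (Nat.factorial j) * (Nat.factorial (n - 2 * j)))) * 2 ^ (n - 2 * j)

lemma gegenbauer_eq_sum_gegenbauerCoeff (n : ℕ) (μ z : ℝ) :
    gegenbauer n μ z = ∑ j ∈ range (n / 2 + 1), gegenbauerCoeff n μ j * z ^ (n - 2 * j) := by
  simp only [gegenbauer, gegenbauerCoeff, mul_pow, mul_assoc]

lemma gegenbauerCoeff_recurrence {μ : ℝ} (hμ : 0 < μ) (ν : ℝ) {n j : ℕ} (hj : 2 * j ≤ n) :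
    ((n : ℝ) - 2 * j + 2) * ((n : ℝ) - 2 * j + 1) * gegenbauerCoeff (n + 2) μ j
      + 2 * (j + 1) * (2 * n - 2 * j + ν) * gegenbauerCoeff (n + 2) μ (j + 1)
      = 2 * μ * (2 * μ + 2 - ν) * gegenbauerCoeff n (μ + 1) j := by
  obtain ⟨d, rfl⟩ : ∃ d, n = 2 * j + d := ⟨n - 2 * j, by omega⟩
  have hα : 0 < (j : ℝ) + d + 1 + μ := by positivity
  have e1 : 2 * j + d + 2 - 2 * j = d + 2 := by omega
  have e2 : 2 * j + d + 2 - 2 * (j + 1) = d := by omega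
  have e3 : 2 * j + d - 2 * j = d := by omega
  simp only [gegenbauerCoeff, e1, e2, e3]
  push_cast
  rw [show (2 * j + d + 2 : ℝ) - j + μ = ((j : ℝ) + d + 1 + μ) + 1 by ring,
    show (2 * j + d + 2 : ℝ) - (j + 1) + μ = (j : ℝ) + d + 1 + μ by ring,
    show (2 * j + d : ℝ) - j + (μ + 1) = (j : ℝ) + d + 1 + μ by ring,
    Real.Gamma_add_one hα.ne', Real.Gamma_add_one hμ.ne', Nat.factorial_succ j,
    Nat.factorial_succ (d + 1), Nat.factorial_succ d]
  have hΓ := (Real.Gamma_pos_of_pos hμ).ne'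
  push_cast
  field_simp
  ring

section SolidGegenbauer

variable {F : Type*} [NormedAddCommGroup F] [InnerProductSpace ℝ F]

noncomputable def solidGegenbauer (n : ℕ) (μ : ℝ) (y x : F) : ℝ :=
  ∑ j ∈ range (n / 2 + 1), gegenbauerCoeff n μ j * (⟪x, y⟫ ^ (n - 2 * j) * (‖x‖ ^ 2) ^ j)

lemma contDiff_solidGegenbauer (n : ℕ) (μ : ℝ) (y : F) {r : WithTop ℕ∞} :
    ContDiff ℝ r (solidGegenbauer n μ y) :=
  ContDiff.sum fun _ _ => contDiff_const.mul (contDiff_inner_pow_mul_norm_sq_pow y _ _)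

lemma pow_mul_div_pow_sub_two_mul {r t : ℝ} (h : r * (t / r) = t) {n j : ℕ} (hj : 2 * j ≤ n) :
    r ^ n * (t / r) ^ (n - 2 * j) = t ^ (n - 2 * j) * (r ^ 2) ^ j := by
  have hr : r ^ n = r ^ (n - 2 * j) * (r ^ 2) ^ j := by
    rw [← pow_mul, ← pow_add, Nat.sub_add_cancel hj]
  calc r ^ n * (t / r) ^ (n - 2 * j) = (r * (t / r)) ^ (n - 2 * j) * (r ^ 2) ^ j := by
        rw [hr, mul_pow]; ring
    _ = t ^ (n - 2 * j) * (r ^ 2) ^ j := by rw [h]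

lemma norm_pow_mul_gegenbauer {y : F} (hy : ‖y‖ = 1) (n : ℕ) (μ : ℝ) (x : F) :
    ‖x‖ ^ n * gegenbauer n μ (⟪x, y⟫ / (‖x‖ * ‖y‖)) = solidGegenbauer n μ y x := by
  have hx : ‖x‖ * (⟪x, y⟫ / ‖x‖) = ⟪x, y⟫ := mul_div_cancel_of_imp' fun h => by
    simp [norm_eq_zero.mp h]
  rw [hy, mul_one, gegenbauer_eq_sum_gegenbauerCoeff, mul_sum]
  refine sum_congr rfl fun j hj => ?_
  rw [mul_left_comm, pow_mul_div_pow_sub_two_mul hx (by have := mem_range.mp hj; omega)]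

end SolidGegenbauer

section LaplacianSolidGegenbauer

variable {N : ℕ}

local notation "E" => EuclideanSpace ℝ (Fin N)

lemma lap_sum_inner_pow_mul_norm_sq_pow {y : E} (hy : ‖y‖ = 1) (n : ℕ) (c : ℕ → ℝ) (x : E) :
    lap (fun z => ∑ j ∈ range (n / 2 + 2), c j * (⟪z, y⟫ ^ (n + 2 - 2 * j) * (‖z‖ ^ 2) ^ j)) x =
      ∑ j ∈ range (n / 2 + 1), (((n : ℝ) - 2 * j + 2) * ((n : ℝ) - 2 * j + 1) * c j
        + 2 * (j + 1) * (2 * n - 2 * j + N) * c (j + 1))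
        * (⟪x, y⟫ ^ (n - 2 * j) * (‖x‖ ^ 2) ^ j) := by
  rw [lap_finset_sum _ fun j _ => contDiff_const.mul (contDiff_inner_pow_mul_norm_sq_pow y _ _)]
  simp only [lap_const_mul _ (contDiff_inner_pow_mul_norm_sq_pow y _ _),
    lap_inner_pow_mul_norm_sq_pow, hy, one_pow, mul_one, mul_add, sum_add_distrib]
  -- the top `j` has no `p (p - 1)` term and `j = 0` no `q` term: the second sum shifts down by one
  rw [sum_range_succ]
  conv_lhs => enter [2]; rw [sum_range_succ']
  have hlast : ((n + 2 - 2 * (n / 2 + 1) : ℕ) : ℝ) * ((n + 2 - 2 * (n / 2 + 1) : ℕ) - 1) = 0 := by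
    rcases Nat.mod_two_eq_zero_or_one n with h | h <;>
      simp [show n + 2 - 2 * (n / 2 + 1) = n % 2 by omega, h]
  simp only [hlast, CharP.cast_eq_zero, mul_zero, zero_mul, add_zero, ← sum_add_distrib]
  refine sum_congr rfl fun j hj => ?_
  have hj : 2 * j ≤ n := by have := mem_range.mp hj; omega
  rw [show n + 2 - 2 * j - 2 = n - 2 * j by omega, show n + 2 - 2 * (j + 1) = n - 2 * j by omega,
    Nat.add_sub_cancel, Nat.cast_sub (by omega : 2 * j ≤ n + 2), Nat.cast_sub hj]
  push_cast
  ring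

lemma lap_solidGegenbauer {y : E} (hy : ‖y‖ = 1) (n : ℕ) {μ : ℝ} (hμ : 0 < μ) :
    lap (solidGegenbauer (n + 2) μ y) =
      fun x => 2 * μ * (2 * μ + 2 - N) * solidGegenbauer n (μ + 1) y x := by
  have hS : solidGegenbauer (n + 2) μ y = fun z => ∑ j ∈ range (n / 2 + 2),
      gegenbauerCoeff (n + 2) μ j * (⟪z, y⟫ ^ (n + 2 - 2 * j) * (‖z‖ ^ 2) ^ j) := by
    funext z
    rw [solidGegenbauer, show (n + 2) / 2 + 1 = n / 2 + 2 by omega]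
  funext x
  rw [hS, lap_sum_inner_pow_mul_norm_sq_pow hy, solidGegenbauer, mul_sum]
  refine sum_congr rfl fun j hj => ?_
  rw [gegenbauerCoeff_recurrence hμ N (by have := mem_range.mp hj; omega), mul_assoc]

lemma iterate_lap_solidGegenbauer {y : E} (hy : ‖y‖ = 1) {μ : ℝ} (hμ : 0 < μ) (n a : ℕ) :
    lap^[a] (solidGegenbauer (n + 2 * a) μ y) = fun x =>
      (∏ b ∈ range a, 2 * (μ + b) * (2 * (μ + b) + 2 - N)) * solidGegenbauer n (μ + a) y x := by
  induction a generalizing n with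
  | zero => simp
  | succ a ih =>
    rw [Function.iterate_succ_apply', show n + 2 * (a + 1) = n + 2 + 2 * a by ring, ih]
    funext x
    rw [lap_const_mul _ (contDiff_solidGegenbauer _ _ _), lap_solidGegenbauer hy n (by positivity),
      prod_range_succ, Nat.cast_succ, ← add_assoc]
    ring

end LaplacianSolidGegenbauer

lemma prod_range_add_eq_Gamma_div_Gamma {μ : ℝ} (hμ : 0 < μ) (m : ℕ) :
    ∏ b ∈ range m, (μ + b) = Real.Gamma (μ + m) / Real.Gamma μ := by
  induction m with
  | zero => simp [(Real.Gamma_pos_of_pos hμ).ne']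
  | succ m ih =>
    rw [prod_range_succ, ih, Nat.cast_succ, ← add_assoc, Real.Gamma_add_one (by positivity)]
    ring

lemma prod_range_natCast_sub (m : ℕ) : ∏ b ∈ range m, ((m : ℝ) - b) = m.factorial := by
  induction m with
  | zero => simp
  | succ m ih =>
    rw [prod_range_succ', Nat.factorial_succ]
    push_cast
    simp only [add_sub_add_right_eq_sub, sub_zero, ih]
    ring

theorem stmt9_general (m k : ℕ) (N : ℕ) (hNm : 0 < (N : ℤ) - 2 * m - 2)
    (l : ℝ) (hl : l = ((N : ℝ) - 2 * m - 2) / 2)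
    (y : EuclideanSpace ℝ (Fin N)) (hy : ‖y‖ = 1)
    (f : EuclideanSpace ℝ (Fin N) → ℝ)
    (hf : ∀ x, f x = ‖x‖ ^ (k + 2 * m) * gegenbauer (k + 2 * m) l (⟪x, y⟫ / (‖x‖ * ‖y‖)))
    (x : EuclideanSpace ℝ (Fin N)) :
    (lap)^[m] f x =
      (-1 : ℝ) ^ m * 4 ^ m * (Real.Gamma (l + m) / Real.Gamma l) * Real.Gamma (m + 1) *
        ‖x‖ ^ k * gegenbauer k (l + m) (⟪x, y⟫ / (‖x‖ * ‖y‖)) := by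
  have hl0 : 0 < l := by
    have : (2 * m + 2 : ℝ) < N := by exact_mod_cast (by omega : 2 * m + 2 < N)
    linarith
  have hf' : f = solidGegenbauer (k + 2 * m) l y :=
    funext fun z => by rw [hf, norm_pow_mul_gegenbauer hy]
  have hconst : ∏ b ∈ range m, 2 * (l + b) * (2 * (l + b) + 2 - N) =
      (-1 : ℝ) ^ m * 4 ^ m * (Real.Gamma (l + m) / Real.Gamma l) * Real.Gamma (m + 1) := by
    calc ∏ b ∈ range m, 2 * (l + b) * (2 * (l + b) + 2 - N)
        = ∏ b ∈ range m, (-4) * ((l + b) * ((m : ℝ) - b)) :=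
          prod_congr rfl fun b _ => by rw [hl]; ring
      _ = (-4) ^ m * (Real.Gamma (l + m) / Real.Gamma l * m.factorial) := by
          rw [prod_mul_distrib, prod_mul_distrib, prod_const, card_range,
            prod_range_add_eq_Gamma_div_Gamma hl0, prod_range_natCast_sub]
      _ = _ := by
          rw [Real.Gamma_nat_eq_factorial, neg_pow]
          ring
  rw [hf', iterate_lap_solidGegenbauer hy hl0, hconst]
  beta_reduce
  rw [← norm_pow_mul_gegenbauer hy]
  ring

/-- for `‖y‖ = 1`,
`Δ_x^m [‖x‖^{k+2m} C^λ_{k+2m}(w)] = (-1)^m 4^m (Γ(λ+m)/Γ(λ)) Γ(m+1) ‖x‖^k C^{λ+m}_k(w)`. -/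
theorem stmt9 (m k : ℕ) (N : ℕ) (hN : 3 ≤ N) (hNm : 0 < (N : ℤ) - 2 * m - 2)
    (l : ℝ) (hl : l = ((N : ℝ) - 2 * m - 2) / 2)
    (y : EuclideanSpace ℝ (Fin N)) (hy : ‖y‖ = 1)
    (f : EuclideanSpace ℝ (Fin N) → ℝ)
    (hf : ∀ x, f x = ‖x‖ ^ (k + 2 * m) * gegenbauer (k + 2 * m) l (⟪x, y⟫ / (‖x‖ * ‖y‖)))
    (x : EuclideanSpace ℝ (Fin N)) (hx : x ≠ 0) :
    (lap)^[m] f x =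
      (-1 : ℝ) ^ m * 4 ^ m * (Real.Gamma (l + m) / Real.Gamma l) * Real.Gamma (m + 1) *
        ‖x‖ ^ k * gegenbauer k (l + m) (⟪x, y⟫ / (‖x‖ * ‖y‖)) :=
  stmt9_general m k N hNm l hl y hy f hf x
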